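/- arXiv:2601.09245 — 3 statements merged into one kernel-verified Lean document; each statement's English description precedes it below -/
import Mathlib

section
/- For n > 0, one has the vanishing identity 4 S^n(n,n,n) - S^n(n+1,n,n) - S^n(n,n+1,n) - S^n(n,n,n+1) = 0, as polynomials in x, y, z. -/
/-! The coefficients satisfy `N · C(k+N, N) = (k+N) · C(k+N-1, N-1)`. Summing this over the three
slots of a term `x^a y^b z^c` of `S^n(N,N,N)` gives
`N · (coefficients of the three shifted sums) = (a+b+c+3N) · (coefficient of S^n(N,N,N))`,
and for `N = a + b + c = n` the factor on the right is `4n`; cancelling `n` gives the identity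
coefficientwise. -/

/-- The binomial coefficient `C(k+N-1, N-1)`, with the convention (from the binomial
series) that for `N = 0` it is the indicator of `k = 0`. -/
def Scoef (N k : ℕ) : ℕ := (k + N - 1).choose k

/-- `S^n(N_x,N_y,N_z) = ∑_{n_x+n_y+n_z=n} C(n_x+N_x-1,N_x-1) C(n_y+N_y-1,N_y-1)
C(n_z+N_z-1,N_z-1) x^{n_x} y^{n_y} z^{n_z}`. -/
def Spoly {R : Type*} [CommRing R] (x y z : R) (n Nx Ny Nz : ℕ) : R :=
  ∑ a ∈ Finset.range (n + 1), ∑ b ∈ Finset.range (n + 1 - a),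
    (Scoef Nx a : R) * (Scoef Ny b : R) * (Scoef Nz (n - a - b) : R)
      * x ^ a * y ^ b * z ^ (n - a - b)

theorem Scoef_succ_mul {N : ℕ} (hN : 0 < N) (k : ℕ) :
    Scoef (N + 1) k * N = Scoef N k * (k + N) := by
  obtain ⟨M, rfl⟩ := Nat.exists_eq_add_of_lt hN
  have h := Nat.choose_mul_succ_eq (k + M) k
  rw [show k + M + 1 - k = M + 1 by omega] at h
  rw [Scoef, Scoef, zero_add, show k + (M + 1 + 1) - 1 = k + M + 1 by omega,
    show k + (M + 1) - 1 = k + M by omega, ← h]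
  ring

theorem Scoef_shift_sum_mul {N : ℕ} (hN : 0 < N) (a b c : ℕ) :
    (Scoef (N + 1) a * Scoef N b * Scoef N c + Scoef N a * Scoef (N + 1) b * Scoef N c +
        Scoef N a * Scoef N b * Scoef (N + 1) c) * N =
      Scoef N a * Scoef N b * Scoef N c * (a + b + c + 3 * N) := by
  have ha := Scoef_succ_mul hN a
  have hb := Scoef_succ_mul hN b
  have hc := Scoef_succ_mul hN c
  linear_combination Scoef N b * Scoef N c * ha + Scoef N a * Scoef N c * hb +
    Scoef N a * Scoef N b * hc

theorem Scoef_shift_sum {n a b c : ℕ} (hn : 0 < n) (habc : a + b + c = n) :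
    Scoef (n + 1) a * Scoef n b * Scoef n c + Scoef n a * Scoef (n + 1) b * Scoef n c +
        Scoef n a * Scoef n b * Scoef (n + 1) c =
      4 * (Scoef n a * Scoef n b * Scoef n c) := by
  refine Nat.eq_of_mul_eq_mul_right hn ?_
  rw [Scoef_shift_sum_mul hn, habc]
  ring

/-- Vanishing identity: for `n > 0`,
`4 S^n(n,n,n) - S^n(n+1,n,n) - S^n(n,n+1,n) - S^n(n,n,n+1) = 0`. -/
theorem stmt5 {R : Type*} [CommRing R] (x y z : R) (n : ℕ) (hn : 0 < n) :
    4 * Spoly x y z n n n n - Spoly x y z n (n + 1) n n -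
      Spoly x y z n n (n + 1) n - Spoly x y z n n n (n + 1) = 0 := by
  simp only [Spoly, Finset.mul_sum, ← Finset.sum_sub_distrib]
  refine Finset.sum_eq_zero fun a ha => Finset.sum_eq_zero fun b hb => ?_
  have habc : a + b + (n - a - b) = n := by
    rw [Finset.mem_range] at ha hb
    omega
  have hcoeff := congrArg (Nat.cast : ℕ → R) (Scoef_shift_sum hn habc)
  push_cast at hcoeff
  linear_combination (-(x ^ a * y ^ b * z ^ (n - a - b))) * hcoeff
end

section
/- The generalized Catalan numbers R^{n,m} = (m/(4n+m)) C(4n+m,n) satisfy the convolution (Hilton–Pedersen) identity: for all n \ge 0 and m, m' \ge 1, \sum_{\ell=0}^{n} R^{\ell,m} R^{n-\ell,m'} = R^{n, m+m'}. -/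
/-!
Both sides satisfy the same recursion. Pascal's rule for `C(4n+m, n)` gives
`R^{n+1,m+1} = R^{n+1,m} + R^{n,m+4}`, and summing this over the antidiagonal turns the
convolution for `(n+1, m+1)` into the convolutions for `(n+1, m)` and `(n, m+4)`. The induction
(on `n`, and on `m` inside) bottoms out at `m = 0`, where `R^{l,0}` is the indicator of `l = 0`.
-/

/-- The generalized Catalan numbers `R^{n,m} = (m/(4n+m)) C(4n+m,n)` for `4n+m > 0`,
with `R^{0,0} := 1`. -/
def Rnm (n m : ℕ) : ℚ :=
  if n = 0 ∧ m = 0 then 1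
  else (m : ℚ) / (4 * n + m) * (Nat.choose (4 * n + m) n : ℚ)

open Finset

lemma Rnm_zero_left (m : ℕ) : Rnm 0 m = 1 := by
  by_cases hm : m = 0 <;> simp [Rnm, hm]

lemma Rnm_zero_right {n : ℕ} (hn : n ≠ 0) : Rnm n 0 = 0 := by
  simp [Rnm, hn]

lemma Rnm_succ_left (n m : ℕ) :
    Rnm (n + 1) m = m / (4 * (n + 1) + m) * ((4 * (n + 1) + m).choose (n + 1) : ℚ) := by
  simp [Rnm]

lemma Rnm_add_four_right (n m : ℕ) :
    Rnm n (m + 4) = (m + 4) / (4 * n + m + 4) * ((4 * n + m + 4).choose n : ℚ) := by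
  simp [Rnm, add_assoc]

lemma Rnm_succ_succ (n m : ℕ) : Rnm (n + 1) (m + 1) = Rnm (n + 1) m + Rnm n (m + 4) := by
  rw [Rnm_succ_left, Rnm_succ_left, Rnm_add_four_right,
    show 4 * (n + 1) + (m + 1) = 4 * n + m + 4 + 1 by ring,
    show 4 * (n + 1) + m = 4 * n + m + 4 by ring]
  set N := 4 * n + m + 4 with hN
  have hpascal : ((N + 1).choose (n + 1) : ℚ) = N.choose n + N.choose (n + 1) := by
    exact_mod_cast Nat.choose_succ_succ' N n
  have hratio : (N.choose (n + 1) : ℚ) * (n + 1) = N.choose n * (3 * n + m + 4) := by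
    have := Nat.choose_succ_right_eq N n
    rw [show N - n = 3 * n + m + 4 by omega] at this
    exact_mod_cast this
  rw [hpascal]
  push_cast [hN]
  field_simp
  linear_combination 4 * (4 * (n : ℚ) + m + 4) * hratio

theorem Rnm_convolution_antidiagonal (n m m' : ℕ) :
    ∑ p ∈ antidiagonal n, Rnm p.1 m * Rnm p.2 m' = Rnm n (m + m') := by
  induction n generalizing m with
  | zero => simp [Rnm_zero_left]
  | succ n ihn =>
    induction m with
    | zero =>
      rw [Nat.sum_antidiagonal_succ]
      simp [Rnm_zero_left, Rnm_zero_right]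
    | succ m ihm =>
      calc ∑ p ∈ antidiagonal (n + 1), Rnm p.1 (m + 1) * Rnm p.2 m'
          = (Rnm 0 m * Rnm (n + 1) m' + ∑ p ∈ antidiagonal n, Rnm (p.1 + 1) m * Rnm p.2 m')
            + ∑ p ∈ antidiagonal n, Rnm p.1 (m + 4) * Rnm p.2 m' := by
            simp only [Nat.sum_antidiagonal_succ, Rnm_zero_left, Rnm_succ_succ, add_mul,
              sum_add_distrib]
            ring
        _ = Rnm (n + 1) (m + m') + Rnm n (m + m' + 4) := by
            rw [← Nat.sum_antidiagonal_succ (f := fun p => Rnm p.1 m * Rnm p.2 m'), ihm, ihn,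
              add_right_comm m]
        _ = Rnm (n + 1) (m + 1 + m') := by
            rw [add_right_comm m 1 m', Rnm_succ_succ]

theorem stmt11_general (n m m' : ℕ) :
    (∑ l ∈ Finset.range (n + 1), Rnm l m * Rnm (n - l) m') = Rnm n (m + m') := by
  rw [← Nat.sum_antidiagonal_eq_sum_range_succ (fun i j => Rnm i m * Rnm j m')]
  exact Rnm_convolution_antidiagonal n m m'

/-- Hilton–Pedersen convolution identity:
`∑_{l=0}^{n} R^{l,m} R^{n-l,m'} = R^{n,m+m'}` for `n ≥ 0` and `m, m' ≥ 1`. -/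
theorem stmt11 (n m m' : ℕ) (hm : 1 ≤ m) (hm' : 1 ≤ m') :
    (∑ l ∈ Finset.range (n + 1), Rnm l m * Rnm (n - l) m') = Rnm n (m + m') :=
  stmt11_general n m m'
end

section
/- The power series \omega(s) defined from the coefficients R^n(1,1,1) satisfies the quartic functional equation \omega(s)(1 - J_X^2 \omega(s))(1 - J_Y^2 \omega(s))(1 - J_Z^2 \omega(s)) = s^2 as formal power series in s. -/
/-- `R^n(N_x,N_y,N_z)` evaluated at `x, y, z`. -/
def Rpoly {R : Type*} [CommRing R] (x y z : R) (n Nx Ny Nz : ℕ) : R :=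
  4 * Spoly x y z n (Nx + n) (Ny + n) (Nz + n)
    - Spoly x y z n (Nx + n + 1) (Ny + n) (Nz + n)
    - Spoly x y z n (Nx + n) (Ny + n + 1) (Nz + n)
    - Spoly x y z n (Nx + n) (Ny + n) (Nz + n + 1)

/-- `f_X(s) = ∑_{n≥0} R^n(1,0,0) s^{2n}` with `x = J_X^2`, `y = J_Y^2`, `z = J_Z^2`. -/
def fX {R : Type*} [CommRing R] (JX JY JZ : R) : PowerSeries R :=
  PowerSeries.mk fun k =>
    if k % 2 = 0 then Rpoly (JX ^ 2) (JY ^ 2) (JZ ^ 2) (k / 2) 1 0 0 else 0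

/-- `f_Y(s) = ∑_{n≥0} R^n(0,1,0) s^{2n}`. -/
def fY {R : Type*} [CommRing R] (JX JY JZ : R) : PowerSeries R :=
  PowerSeries.mk fun k =>
    if k % 2 = 0 then Rpoly (JX ^ 2) (JY ^ 2) (JZ ^ 2) (k / 2) 0 1 0 else 0

/-- `f_Z(s) = ∑_{n≥0} R^n(0,0,1) s^{2n}`. -/
def fZ {R : Type*} [CommRing R] (JX JY JZ : R) : PowerSeries R :=
  PowerSeries.mk fun k =>
    if k % 2 = 0 then Rpoly (JX ^ 2) (JY ^ 2) (JZ ^ 2) (k / 2) 0 0 1 else 0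

/-- `ω(s) = ∑_{n≥0} R^n(1,1,1) s^{2n+2}`. -/
def omegaPS {R : Type*} [CommRing R] (JX JY JZ : R) : PowerSeries R :=
  PowerSeries.mk fun k =>
    if 2 ≤ k ∧ k % 2 = 0 then Rpoly (JX ^ 2) (JY ^ 2) (JZ ^ 2) ((k - 2) / 2) 1 1 1 else 0

/-!
Put `t = s²` and `ψ(t) = (1 - x t)(1 - y t)(1 - z t)` with `x, y, z = J_X², J_Y², J_Z²`. The claim
says that `V = ∑ Rⁿ(1,1,1) t^(n+1)` is the compositional inverse of `P(t) = t ψ(t)`. By Lagrange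
inversion its `t^(n+1)`-coefficient is `[tⁿ] P' ψ^(-(n+2))`, and since `ψ⁻¹` is a product of three
geometric series with `P' ψ⁻¹ = 4 - ∑_α (1 - α t)⁻¹`, this coefficient is the four-term combination
of the `Sⁿ` defining `Rⁿ(1,1,1)`. The residue argument behind Lagrange inversion divides by
integers, so the identity is proved for the generic torsion-free ring `ℤ[x, y, z]` and specialised.
-/

open PowerSeries

section Geometric

variable {K : Type*} [CommRing K]

noncomputable def geomSeries (a : K) : K⟦X⟧ := rescale a (mk 1)

lemma one_sub_C_mul_X_mul_geomSeries (a : K) : (1 - C a * X) * geomSeries a = 1 := by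
  rw [geomSeries, ← rescale_X, ← map_one (rescale a), ← map_sub, ← map_mul, mul_comm,
    mk_one_mul_one_sub_eq_one, map_one]

lemma coeff_geomSeries_pow (a : K) (N k : ℕ) :
    coeff k (geomSeries a ^ N) = Scoef N k * a ^ k := by
  rw [geomSeries, ← map_pow, coeff_rescale, mul_comm]
  congr 1
  rcases N with _ | d
  · rcases k with _ | k <;> simp [Scoef, coeff_one]
  · rw [mk_one_pow_eq_mk_choose_add, coeff_mk, Scoef, ← add_assoc, Nat.add_sub_cancel, add_comm,
      Nat.choose_symm_add]

lemma Spoly_eq_coeff (x y z : K) (n Nx Ny Nz : ℕ) :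
    Spoly x y z n Nx Ny Nz
      = coeff n (geomSeries x ^ Nx * (geomSeries y ^ Ny * geomSeries z ^ Nz)) := by
  simp only [Spoly, coeff_mul, Finset.Nat.sum_antidiagonal_eq_sum_range_succ_mk,
    Finset.mul_sum, coeff_geomSeries_pow]
  refine Finset.sum_congr rfl fun a ha => ?_
  rw [show n + 1 - a = n - a + 1 by grind]
  refine Finset.sum_congr rfl fun b _ => ?_
  rw [Nat.sub_sub]
  ring

end Geometric

section Lagrange

variable {K : Type*} [CommRing K] {ψ φ : K⟦X⟧}

lemma derivative_pow_of_mul_eq_one (h : ψ * φ = 1) (j : ℕ) :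
    d⁄dX K (φ ^ j) = -(j • (d⁄dX K ψ * φ ^ (j + 1))) := by
  have hφ : d⁄dX K φ = -(d⁄dX K ψ * φ ^ 2) := by
    have h' := congrArg (d⁄dX K) h
    rw [Derivation.leibniz, Derivation.map_one_eq_zero, smul_eq_mul, smul_eq_mul] at h'
    linear_combination φ * h' - d⁄dX K φ * h
  rcases j with _ | m
  · simp
  · rw [Derivation.leibniz_pow, hφ, smul_eq_mul, Nat.add_sub_cancel]
    simp only [nsmul_eq_mul]
    ring

variable [IsAddTorsionFree K]

lemma coeff_derivative_X_mul_mul_pow_succ (h : ψ * φ = 1) (j : ℕ) :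
    coeff j (d⁄dX K (X * ψ) * φ ^ (j + 1)) = if j = 0 then 1 else 0 := by
  have hsplit : d⁄dX K (X * ψ) * φ ^ (j + 1) = φ ^ j + X * (d⁄dX K ψ * φ ^ (j + 1)) := by
    rw [Derivation.leibniz, derivative_X, smul_eq_mul, smul_eq_mul, pow_succ']
    linear_combination φ ^ j * h
  rw [hsplit]
  rcases j with _ | m
  · simp
  · -- `(m + 1) • ((X ψ)' φ ^ (m + 2)) = (m + 1) • φ ^ (m + 1) - X (φ ^ (m + 1))'`, whose
    -- `X ^ (m + 1)`-coefficient vanishes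
    have hD := congrArg (coeff m) (derivative_pow_of_mul_eq_one h (m + 1))
    rw [coeff_derivative, map_neg, map_nsmul] at hD
    rw [if_neg m.succ_ne_zero, map_add, coeff_succ_X_mul]
    apply IsAddTorsionFree.nsmul_right_injective m.succ_ne_zero
    simp only [smul_zero, nsmul_eq_mul] at hD ⊢
    push_cast at hD ⊢
    linear_combination hD

theorem coeff_succ_eq_of_subst_X_mul_eq_X (h : ψ * φ = 1) {W : K⟦X⟧}
    (hW : W.subst (X * ψ) = X) (n : ℕ) :
    coeff (n + 1) W = coeff n (d⁄dX K (X * ψ) * φ ^ (n + 2)) := by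
  set P := X * ψ
  have hP : HasSubst P := HasSubst.of_constantCoeff_zero' (by simp [P])
  have hcoeff_pow_mul : ∀ k ≤ n + 1,
      coeff (n + 1) (P ^ k * (d⁄dX K P * φ ^ (n + 2))) = if k = n + 1 then 1 else 0 := by
    intro k hk
    have : P ^ k * (d⁄dX K P * φ ^ (n + 2)) = X ^ k * (d⁄dX K P * φ ^ (n + 1 - k + 1)) := by
      calc _ = X ^ k * (ψ * φ) ^ k * (d⁄dX K P * φ ^ (n + 1 - k + 1)) := by
            rw [show n + 2 = k + (n + 1 - k + 1) by omega, pow_add, mul_pow, mul_pow]; ring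
        _ = _ := by rw [h, one_pow, mul_one]
    rw [this, coeff_X_pow_mul', if_pos hk, coeff_derivative_X_mul_mul_pow_succ h]
    grind
  have hsubst : W.subst P = P ^ (n + 2) * (mk fun i ↦ coeff (i + (n + 2)) W).subst P
      + ∑ i ∈ Finset.range (n + 2), C (coeff i W) * P ^ i := by
    conv_lhs => rw [eq_X_pow_mul_shift_add_trunc (n + 2) W]
    rw [subst_add hP, subst_mul hP, subst_pow hP, subst_X hP, subst_coe hP, Polynomial.aeval_def,
      eval₂_trunc_eq_sum_range]
    rfl
  have hhigh (F : K⟦X⟧) : coeff (n + 1) (P ^ (n + 2) * F) = 0 := by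
    rw [mul_pow, mul_assoc, coeff_X_pow_mul', if_neg (by omega)]
  have hcoeff := congrArg (coeff (n + 1)) (congrArg (· * (d⁄dX K P * φ ^ (n + 2))) hW)
  simp only [hsubst, add_mul, map_add, hhigh, Finset.sum_mul, map_sum, mul_assoc, coeff_C_mul,
    coeff_succ_X_mul, zero_add] at hcoeff
  rw [← hcoeff, Finset.sum_congr rfl fun k hk => by rw [hcoeff_pow_mul k (by simp at hk; omega)]]
  simp

end Lagrange

section Cubic

variable {K : Type*} [CommRing K] (x y z : K)

noncomputable def cubicFactor : K⟦X⟧ := (1 - C x * X) * ((1 - C y * X) * (1 - C z * X))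

noncomputable def cubicFactorInv : K⟦X⟧ := geomSeries x * (geomSeries y * geomSeries z)

lemma cubicFactor_mul_cubicFactorInv : cubicFactor x y z * cubicFactorInv x y z = 1 := by
  rw [cubicFactor, cubicFactorInv]
  linear_combination ((1 - C y * X) * geomSeries y * ((1 - C z * X) * geomSeries z)) *
      one_sub_C_mul_X_mul_geomSeries x
    + ((1 - C z * X) * geomSeries z) * one_sub_C_mul_X_mul_geomSeries y
    + one_sub_C_mul_X_mul_geomSeries z

lemma derivative_X_mul_cubicFactor_mul_cubicFactorInv :
    d⁄dX K (X * cubicFactor x y z) * cubicFactorInv x y z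
      = 4 - geomSeries x - geomSeries y - geomSeries z := by
  set Ex := (1 - C x * X) * geomSeries x
  set Ey := (1 - C y * X) * geomSeries y
  set Ez := (1 - C z * X) * geomSeries z
  simp only [cubicFactor, cubicFactorInv, Derivation.leibniz, map_sub, derivative_C,
    derivative_X, Derivation.map_one_eq_zero, smul_eq_mul]
  linear_combination (4 * Ey * Ez - geomSeries y * Ez - geomSeries z * Ey) *
      one_sub_C_mul_X_mul_geomSeries x
    + (4 * Ez - geomSeries x * Ez - geomSeries z) * one_sub_C_mul_X_mul_geomSeries y
    + (4 - geomSeries x - geomSeries y) * one_sub_C_mul_X_mul_geomSeries z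

lemma Rpoly_eq_coeff (n : ℕ) :
    Rpoly x y z n 1 1 1
      = coeff n (d⁄dX K (X * cubicFactor x y z) * cubicFactorInv x y z ^ (n + 2)) := by
  have : d⁄dX K (X * cubicFactor x y z) * cubicFactorInv x y z ^ (n + 2)
      = C 4 * (geomSeries x ^ (1 + n) * (geomSeries y ^ (1 + n) * geomSeries z ^ (1 + n)))
        - geomSeries x ^ (1 + n + 1) * (geomSeries y ^ (1 + n) * geomSeries z ^ (1 + n))
        - geomSeries x ^ (1 + n) * (geomSeries y ^ (1 + n + 1) * geomSeries z ^ (1 + n))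
        - geomSeries x ^ (1 + n) * (geomSeries y ^ (1 + n) * geomSeries z ^ (1 + n + 1)) := by
    rw [pow_succ', ← mul_assoc, derivative_X_mul_cubicFactor_mul_cubicFactorInv, cubicFactorInv,
      map_ofNat]
    ring
  rw [this, map_sub, map_sub, map_sub, coeff_C_mul, Rpoly, Spoly_eq_coeff, Spoly_eq_coeff,
    Spoly_eq_coeff, Spoly_eq_coeff]

end Cubic

section Omega

variable {K : Type*} [CommRing K]

-- `ω` as a series in `t = s²` (see `omegaPS_eq_expand`)
noncomputable def omegaSeries (x y z : K) : K⟦X⟧ := X * mk fun n ↦ Rpoly x y z n 1 1 1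

lemma omegaSeries_functional_equation_of_isAddTorsionFree [IsAddTorsionFree K] (x y z : K) :
    omegaSeries x y z * (1 - C x * omegaSeries x y z) * (1 - C y * omegaSeries x y z)
      * (1 - C z * omegaSeries x y z) = X := by
  set P := X * cubicFactor x y z
  have hP0 : constantCoeff P = 0 := by simp [P]
  have hP1 : IsUnit (coeff 1 P) := by simp [P, cubicFactor]
  have hω : P.substInvOfIsUnit hP1 = omegaSeries x y z := by
    ext (_ | n)
    · simp [omegaSeries]
    · rw [coeff_succ_eq_of_subst_X_mul_eq_X (cubicFactor_mul_cubicFactorInv x y z)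
        (subst_substInvOfIsUnit_left P hP0 hP1), ← Rpoly_eq_coeff, omegaSeries,
        coeff_succ_X_mul, coeff_mk]
  have hsubst := subst_substInvOfIsUnit_right P hP0 hP1
  have hω0 : HasSubst (omegaSeries x y z) := HasSubst.of_constantCoeff_zero' (by simp [omegaSeries])
  rw [hω, ← coe_substAlgHom hω0] at hsubst
  simp only [P, cubicFactor, map_mul, map_sub, map_one, substAlgHom_X,
    show ∀ a : K, substAlgHom hω0 (C a) = C a from (substAlgHom hω0).commutes] at hsubst
  rw [← hsubst]
  ring

end Omega

section Transfer

variable {A B : Type*} [CommRing A] [CommRing B] (f : A →+* B) (x y z : A)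

lemma map_Spoly (n Nx Ny Nz : ℕ) :
    f (Spoly x y z n Nx Ny Nz) = Spoly (f x) (f y) (f z) n Nx Ny Nz := by
  simp [Spoly]

lemma map_Rpoly (n Nx Ny Nz : ℕ) :
    f (Rpoly x y z n Nx Ny Nz) = Rpoly (f x) (f y) (f z) n Nx Ny Nz := by
  simp [Rpoly, map_Spoly, map_ofNat]

lemma map_omegaSeries : map f (omegaSeries x y z) = omegaSeries (f x) (f y) (f z) := by
  ext (_ | n) <;> simp [omegaSeries, map_Rpoly]

end Transfer

theorem omegaSeries_functional_equation {R : Type*} [CommRing R] (x y z : R) :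
    omegaSeries x y z * (1 - C x * omegaSeries x y z) * (1 - C y * omegaSeries x y z)
      * (1 - C z * omegaSeries x y z) = X := by
  have generic := omegaSeries_functional_equation_of_isAddTorsionFree
    (MvPolynomial.X 0 : MvPolynomial (Fin 3) ℤ) (MvPolynomial.X 1) (MvPolynomial.X 2)
  simpa [map_omegaSeries] using
    congrArg (map (MvPolynomial.eval₂Hom (Int.castRingHom R) ![x, y, z])) generic

lemma omegaPS_eq_expand {R : Type*} [CommRing R] (JX JY JZ : R) :
    omegaPS JX JY JZ = expand 2 two_ne_zero (omegaSeries (JX ^ 2) (JY ^ 2) (JZ ^ 2)) := by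
  ext k
  rw [coeff_expand, omegaPS, coeff_mk]
  obtain ⟨m, rfl | rfl⟩ := Nat.even_or_odd' k
  · rcases m with _ | m
    · simp [omegaSeries]
    · simp [omegaSeries, Nat.mul_add]
  · simp

/-- The quartic functional equation
`ω(s)(1 - J_X^2 ω(s))(1 - J_Y^2 ω(s))(1 - J_Z^2 ω(s)) = s^2`. -/
theorem stmt17 {R : Type*} [CommRing R] (JX JY JZ : R) :
    omegaPS JX JY JZ *
      (1 - PowerSeries.C (JX ^ 2) * omegaPS JX JY JZ) *
      (1 - PowerSeries.C (JY ^ 2) * omegaPS JX JY JZ) *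
      (1 - PowerSeries.C (JZ ^ 2) * omegaPS JX JY JZ) = PowerSeries.X ^ 2 := by
  have h := congrArg (expand 2 two_ne_zero)
    (omegaSeries_functional_equation (JX ^ 2) (JY ^ 2) (JZ ^ 2))
  simp only [map_mul, map_sub, map_one, expand_C, expand_X] at h
  rwa [omegaPS_eq_expand]
end
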